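/- arXiv:2511.07251 — 2 statements merged into one kernel-verified Lean document; each statement's English description precedes it below -/
import Mathlib

section
/- Let F be the group with presentation ⟨x, y, a ∣ (yx)y(yx)⁻¹x⁻¹ = 1, (x⁻¹ax)a⁻¹x⁻¹(yay⁻¹) = 1⟩ and let σ = (1 5 4 3 2) ∈ A₅. Then the number of group homomorphisms φ : F → A₅ with φ(a) = σ equals 1. -/
open Equiv Equiv.Perm

/-- Generator `x` of the free group on three generators. -/
def X : FreeGroup (Fin 3) := FreeGroup.of 0
/-- Generator `y`. -/
def Y : FreeGroup (Fin 3) := FreeGroup.of 1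
/-- Generator `a`. -/
def A : FreeGroup (Fin 3) := FreeGroup.of 2

/-- Relator r₁ = (yx)·y·(yx)⁻¹·x⁻¹. -/
def r1 : FreeGroup (Fin 3) := (Y * X) * Y * (Y * X)⁻¹ * X⁻¹
/-- Relator r₂ = (x⁻¹ a x)·a⁻¹·x⁻¹·(y a y⁻¹). -/
def r2 : FreeGroup (Fin 3) := (X⁻¹ * A * X) * A⁻¹ * X⁻¹ * (Y * A * Y⁻¹)

/-- The relator set of the presentation
`⟨x, y, a ∣ (yx)y(yx)⁻¹x⁻¹ = 1, (x⁻¹ax)a⁻¹x⁻¹(yay⁻¹) = 1⟩`. -/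
def rels : Set (FreeGroup (Fin 3)) := {r1, r2}

/-!
The relators say that `x` and `y` satisfy the braid relation `xyx = yxy` and that
`y a y⁻¹ = x a x⁻¹ a⁻¹ x`. Sending every generator to the same element satisfies both, which
gives one homomorphism. Conversely, in `S₅` with `a = σ` the second relation makes
`x σ x⁻¹ σ⁻¹ x` a conjugate of `σ`, so its fifth power is trivial; a finite search over pairs
of permutations then shows that the two relations force `x = y = σ`.
-/

theorem PresentedGroup.mk_of {α : Type*} (rels : Set (FreeGroup α)) (i : α) :
    PresentedGroup.mk rels (FreeGroup.of i) = PresentedGroup.of i :=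
  rfl

section Relations

variable {G : Type*} [Group G]

theorem braid_of_relator {x y : G} (h : y * x * y * (y * x)⁻¹ * x⁻¹ = 1) :
    x * y * x = y * x * y := by
  rw [mul_inv_eq_one, mul_inv_eq_iff_eq_mul] at h
  rw [h, mul_assoc]

theorem conj_eq_of_relator {x y a : G}
    (h : x⁻¹ * a * x * a⁻¹ * x⁻¹ * (y * a * y⁻¹) = 1) :
    y * a * y⁻¹ = x * a * x⁻¹ * a⁻¹ * x := by
  rw [eq_inv_of_mul_eq_one_right h]
  group

theorem braid_of_hom (φ : PresentedGroup rels →* G) :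
    φ (.of 0) * φ (.of 1) * φ (.of 0) = φ (.of 1) * φ (.of 0) * φ (.of 1) := by
  have h := congrArg φ (PresentedGroup.one_of_mem (show r1 ∈ rels from .inl rfl))
  simp only [r1, X, Y, map_mul, map_inv, map_one, PresentedGroup.mk_of] at h
  exact braid_of_relator h

theorem conj_eq_of_hom (φ : PresentedGroup rels →* G) :
    φ (.of 1) * φ (.of 2) * (φ (.of 1))⁻¹ =
      φ (.of 0) * φ (.of 2) * (φ (.of 0))⁻¹ * (φ (.of 2))⁻¹ * φ (.of 0) := by
  have h := congrArg φ (PresentedGroup.one_of_mem (show r2 ∈ rels from .inr rfl))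
  simp only [r2, X, Y, A, map_mul, map_inv, map_one, PresentedGroup.mk_of] at h
  exact conj_eq_of_relator h

theorem lift_const_eq_one_of_mem_rels (g : G) :
    ∀ r ∈ rels, FreeGroup.lift (fun _ => g) r = 1 := by
  rintro r (rfl | rfl) <;>
  simp only [r1, r2, X, Y, A, map_mul, map_inv, FreeGroup.lift_apply_of] <;> group

def constHom (g : G) : PresentedGroup rels →* G :=
  PresentedGroup.toGroup (lift_const_eq_one_of_mem_rels g)

theorem constHom_of (g : G) (i : Fin 3) : constHom g (.of i) = g :=
  PresentedGroup.toGroup.of _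

end Relations

theorem cycle_pow_five : (c[0, 4, 3, 2, 1] : Perm (Fin 5)) ^ 5 = 1 := by
  decide

-- The condition on `x` alone, checked before `y` is quantified, leaves only 15 candidates for `x`.
theorem eq_cycle_of_pow_five_of_conj_eq_of_braid :
    ∀ x : Perm (Fin 5), (x * c[0, 4, 3, 2, 1] * x⁻¹ * c[0, 4, 3, 2, 1]⁻¹ * x) ^ 5 = 1 →
      ∀ y : Perm (Fin 5),
        y * c[0, 4, 3, 2, 1] * y⁻¹ = x * c[0, 4, 3, 2, 1] * x⁻¹ * c[0, 4, 3, 2, 1]⁻¹ * x →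
        x * y * x = y * x * y → x = c[0, 4, 3, 2, 1] ∧ y = c[0, 4, 3, 2, 1] := by
  decide +kernel

theorem eq_cycle_of_braid_of_conj_eq {x y : Perm (Fin 5)} (hbraid : x * y * x = y * x * y)
    (hconj : y * c[0, 4, 3, 2, 1] * y⁻¹ = x * c[0, 4, 3, 2, 1] * x⁻¹ * c[0, 4, 3, 2, 1]⁻¹ * x) :
    x = c[0, 4, 3, 2, 1] ∧ y = c[0, 4, 3, 2, 1] := by
  refine eq_cycle_of_pow_five_of_conj_eq_of_braid x ?_ y hconj hbraid
  rw [← hconj, conj_pow, cycle_pow_five, mul_one, mul_inv_cancel]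

theorem eq_constHom_of_map_of_two (φ : PresentedGroup rels →* alternatingGroup (Fin 5))
    {σ : alternatingGroup (Fin 5)} (hσ : (σ : Perm (Fin 5)) = c[0, 4, 3, 2, 1])
    (hφ : φ (.of 2) = σ) : φ = constHom σ := by
  set ψ := (alternatingGroup (Fin 5)).subtype.comp φ
  have hψa : ψ (.of 2) = c[0, 4, 3, 2, 1] := by simp [ψ, hφ, hσ]
  obtain ⟨hx, hy⟩ := eq_cycle_of_braid_of_conj_eq (braid_of_hom ψ) (hψa ▸ conj_eq_of_hom ψ)
  refine PresentedGroup.ext fun i => Subtype.ext ?_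
  rw [constHom_of, hσ]
  fin_cases i
  exacts [hx, hy, hψa]

/-- The number of group homomorphisms `φ : F → A₅` with `φ(a) = (1 5 4 3 2)` equals `1`. -/
theorem stmt1 (σ : alternatingGroup (Fin 5))
    (hσ : (σ : Equiv.Perm (Fin 5)) = c[0, 4, 3, 2, 1]) :
    Nat.card {φ : PresentedGroup rels →* alternatingGroup (Fin 5) //
      φ (PresentedGroup.of 2) = σ} = 1 := by
  rw [Nat.card_eq_one_iff_exists]
  exact ⟨⟨constHom σ, constHom_of σ 2⟩,
    fun ⟨φ, hφ⟩ => Subtype.ext (eq_constHom_of_map_of_two φ hσ hφ)⟩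
end

section
/- Let H and A be groups, h ∈ H, σ ∈ A, and suppose σ is conjugate to σ⁻¹ in A. If ψ : H → H' is a group isomorphism carrying the conjugacy class of h to the conjugacy class of h'⁻¹ in H', then there is a bijection between {φ ∈ Hom(H, A) : φ(h) = σ} and {φ' ∈ Hom(H', A) : φ'(h') = σ}. -/
/-- Let `H, H', A` be groups, `h ∈ H`, `h' ∈ H'`, `σ ∈ A` with `σ` conjugate to `σ⁻¹` in `A`.
If `ψ : H ≃ H'` is an isomorphism carrying (the conjugacy class of) `h` to the conjugacy
class of `h'⁻¹`, then `{φ ∈ Hom(H, A) : φ(h) = σ}` is in bijection with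
`{φ' ∈ Hom(H', A) : φ'(h') = σ}`. -/
theorem stmt6 (H H' A : Type*) [Group H] [Group H'] [Group A]
    (h : H) (h' : H') (σ : A) (hσ : ∃ τ : A, τ * σ * τ⁻¹ = σ⁻¹)
    (ψ : H ≃* H') (hψ : IsConj (ψ h) h'⁻¹) :
    Nonempty ({φ : H →* A // φ h = σ} ≃ {φ' : H' →* A // φ' h' = σ}) := by
  obtain ⟨τ, hτ⟩ := hσ
  rw [isConj_iff] at hψ
  obtain ⟨g, hg⟩ := hψ
  have hsg : ψ.symm h' = ψ.symm g * h⁻¹ * (ψ.symm g)⁻¹ := by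
    apply ψ.injective
    simp only [map_mul, map_inv, MulEquiv.apply_symm_apply]
    rw [← inv_inv h', ← hg]; group
  have hph : ψ h = g⁻¹ * h'⁻¹ * g := by rw [← hg]; group
  have hτ' : τ * σ⁻¹ * τ⁻¹ = σ := by
    have := congrArg (fun x => x⁻¹) hτ
    simpa [mul_assoc] using this
  refine ⟨{
    toFun := fun φ => ⟨(MulAut.conj ((φ.1 (ψ.symm g)) * τ)⁻¹).toMonoidHom.comp
      (φ.1.comp ψ.symm.toMonoidHom), ?_⟩
    invFun := fun φ' => ⟨(MulAut.conj (τ * φ'.1 g)).toMonoidHom.comp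
      (φ'.1.comp ψ.toMonoidHom), ?_⟩
    left_inv := ?_
    right_inv := ?_ }⟩
  · obtain ⟨φ, hφ⟩ := φ
    simp only [MonoidHom.coe_comp, Function.comp_apply, MulEquiv.coe_toMonoidHom,
      MulAut.conj_apply, MulEquiv.coe_toMonoidHom] at *
    rw [hsg]
    simp only [map_mul, map_inv, hφ]
    rw [← hτ]; group
  · obtain ⟨φ', hφ'⟩ := φ'
    simp only [MonoidHom.coe_comp, Function.comp_apply, MulEquiv.coe_toMonoidHom,
      MulAut.conj_apply]
    rw [hph]
    simp only [map_mul, map_inv, hφ']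
    conv_rhs => rw [← hτ']
    group
  · rintro ⟨φ, hφ⟩
    ext x
    simp only [MonoidHom.coe_comp, Function.comp_apply, MulEquiv.coe_toMonoidHom,
      MulAut.conj_apply, MulEquiv.symm_apply_apply]
    group
  · rintro ⟨φ', hφ'⟩
    ext x
    simp only [MonoidHom.coe_comp, Function.comp_apply, MulEquiv.coe_toMonoidHom,
      MulAut.conj_apply, MulEquiv.apply_symm_apply]
    group
end
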